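/- Let G be a finitely generated group such that the graded Lie algebra gr•(G/G'') ⊗ ℂ vanishes in all sufficiently large degrees. Then the I-adic filtration on the Alexander invariant H₁(G', ℂ) stabilizes, and its I-adic completion is finite-dimensional over ℂ. -/

import Mathlib

open scoped TensorProduct

/-- `H₁(G, ℂ) = G_ab ⊗ ℂ`. -/
abbrev H1c (G : Type) [Group G] : Type := ℂ ⊗[ℤ] (Additive (Abelianization G))

/-- The map `H₁(G, ℂ) → H₁(H, ℂ)` induced by a group homomorphism. -/
noncomputable def H1cMap {G H : Type} [Group G] [Group H] (f : G →* H) :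
    H1c G →ₗ[ℤ] H1c H :=
  LinearMap.lTensor ℂ ((MonoidHom.toAdditive (Abelianization.map f)).toIntLinearMap)

/-!
Write `I` for the augmentation ideal of `ℂ[G_ab]`, `H = H₁(G', ℂ)`, and index the lower
central series from `γ₀ = G`. Conjugation by `g` acts on `H` as `[g] ∈ G_ab`, so
`([g] - 1) · (c ⊗ [w]) = c ⊗ [⁅g, w⁆]`; since `I` is generated by the `[g] - 1`, induction
on `q` shows that `I^q H` is spanned by the classes `c ⊗ [w]` with `w ∈ γ_{q+1}` (Massey).
If `gr_{q+1}(G/G'')` is torsion, each `w ∈ γ_{q+1}` has a power `w^m ∈ γ_{q+2} G''`; as `G''`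
dies in `H` and `m` is invertible in `ℂ`, this gives `I^q H = I^{q+1} H` for all large `q`.
The completion then injects into `H / I^N H`, a finite module over `ℂ[G_ab] / I^N`, which is
finite-dimensional because `I` is finitely generated and `ℂ[G_ab] / I = ℂ`.
-/

open MonoidAlgebra
open scoped commutatorElement

theorem Ideal.finite_quotient_pow_of_fg {k R : Type*} [CommRing k] [CommRing R] [Algebra k R]
    {I : Ideal R} (hI : I.FG) [Module.Finite k (R ⧸ I)] (n : ℕ) :
    Module.Finite k (R ⧸ I ^ n) := by
  cases n with
  | zero =>
    rw [pow_zero, Ideal.one_eq_top]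
    infer_instance
  | succ n =>
    have hle : I ^ (n + 1) ≤ I := Ideal.pow_le_self n.succ_ne_zero
    have hker : RingHom.ker (Ideal.Quotient.factorₐ k hle) = I.map (Ideal.Quotient.mk _) :=
      (Ideal.ker_quotient_lift _ _).trans (by rw [Ideal.mk_ker])
    refine Module.finite_of_surjective_of_ker_le_nilradical (Ideal.Quotient.factorₐ k hle)
      (Ideal.Quotient.factor_surjective hle) ?_ (hker ▸ hI.map _)
    rw [hker, Ideal.map_le_iff_le_comap]
    intro r hr
    exact mem_nilradical.2 ⟨n + 1, by
      rw [← map_pow, Ideal.Quotient.eq_zero_iff_mem]; exact Ideal.pow_mem_pow hr _⟩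

namespace MonoidAlgebra

variable {k : Type*} [CommRing k]

theorem ker_lift_one_eq_span {M : Type*} [Monoid M] :
    RingHom.ker (lift k k M 1) = Ideal.span (Set.range fun m : M => single m (1 : k) - 1) := by
  refine le_antisymm (fun r hr => ?_) (Ideal.span_le.2 ?_)
  · have key : ∀ r : MonoidAlgebra k M, r - single 1 (lift k k M 1 r) ∈
        Ideal.span (Set.range fun m : M => single m (1 : k) - 1) := by
      intro r
      induction r using MonoidAlgebra.induction_linear with
      | zero => simp
      | add f g hf hg =>
        rw [map_add, single_add, add_sub_add_comm]
        exact add_mem hf hg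
      | single m b =>
        have : single m b - single 1 (lift k k M 1 (single m b)) =
            single 1 b * (single m 1 - 1) := by
          rw [lift_single, mul_sub, single_mul_single]
          simp
        rw [this]
        exact Ideal.mul_mem_left _ _ (Ideal.subset_span ⟨m, rfl⟩)
    simpa [RingHom.mem_ker.1 hr] using key r
  · rintro _ ⟨m, rfl⟩
    simp [RingHom.mem_ker, lift_single]

theorem ker_lift_one_eq_span_image {G : Type*} [Group G] {S : Set G}
    (hS : Subgroup.closure S = ⊤) :
    RingHom.ker (lift k k G 1) = Ideal.span ((fun g : G => single g (1 : k) - 1) '' S) := by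
  refine ker_lift_one_eq_span.trans
    (le_antisymm (Ideal.span_le.2 ?_) (Ideal.span_mono (Set.image_subset_range _ _)))
  rintro _ ⟨g, rfl⟩
  have hg : g ∈ Subgroup.closure S := hS ▸ Subgroup.mem_top g
  show single g 1 - 1 ∈ _
  induction hg using Subgroup.closure_induction with
  | mem g hg => exact Ideal.subset_span ⟨g, hg, rfl⟩
  | one => simp [one_def]
  | mul g h _ _ ihg ihh =>
    have : single (g * h) (1 : k) - 1 = single g 1 * (single h 1 - 1) + (single g 1 - 1) := by
      rw [mul_sub, single_mul_single]; simp
    rw [this]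
    exact add_mem (Ideal.mul_mem_left _ _ ihh) ihg
  | inv g _ ihg =>
    have : single g⁻¹ (1 : k) - 1 = -(single g⁻¹ 1 * (single g 1 - 1)) := by
      rw [mul_sub, single_mul_single]; simp [one_def]
    rw [this]
    exact neg_mem (Ideal.mul_mem_left _ _ ihg)

theorem fg_ker_lift_one {G : Type*} [Group G] [Group.FG G] : (RingHom.ker (lift k k G 1)).FG := by
  classical
  obtain ⟨S, hS⟩ := Group.FG.out (G := G)
  exact ⟨S.image _, by rw [ker_lift_one_eq_span_image hS, Finset.coe_image]⟩

theorem finite_quotient_ker_lift_one_pow {G : Type*} [CommGroup G] [Group.FG G] (n : ℕ) :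
    Module.Finite k (MonoidAlgebra k G ⧸ RingHom.ker (lift k k G 1) ^ n) := by
  have hsurj : Function.Surjective (lift k k G 1) := fun c =>
    ⟨single 1 c, by simp [lift_single]⟩
  have : Module.Finite k (MonoidAlgebra k G ⧸ RingHom.ker (lift k k G 1)) :=
    .of_surjective (Ideal.quotientKerAlgEquivOfSurjective hsurj).symm.toLinearMap
      (AlgEquiv.surjective _)
  exact Ideal.finite_quotient_pow_of_fg fg_ker_lift_one n

end MonoidAlgebra

namespace AdicCompletion

variable {R M : Type*} [CommRing R] [AddCommGroup M] [Module R M] {I : Ideal R} {N : ℕ}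

theorem eval_injective_of_pow_smul_eq
    (h : ∀ n ≥ N, (I ^ n • ⊤ : Submodule R M) = I ^ N • ⊤) :
    Function.Injective (eval I M N) := by
  refine (injective_iff_map_eq_zero _).2 fun x hx => ?_
  ext n
  rw [eval_apply] at hx
  rcases le_total n N with hn | hn
  · rw [val_zero_apply, ← x.property hn, hx, _root_.map_zero]
  · obtain ⟨y, hy⟩ := Submodule.Quotient.mk_surjective _ (x.val n)
    have hyN : y ∈ (I ^ N • ⊤ : Submodule R M) := by
      rw [← Submodule.Quotient.mk_eq_zero, ← hx, ← x.property hn, ← hy]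
      rfl
    rw [← hy, val_zero_apply, Submodule.Quotient.mk_eq_zero, h n hn]
    exact hyN

theorem finite_of_pow_smul_eq (k : Type*) [CommRing k] [IsNoetherianRing k] [Algebra k R]
    [Module.Finite R M] [Module.Finite k (R ⧸ I ^ N)]
    (h : ∀ n ≥ N, (I ^ n • ⊤ : Submodule R M) = I ^ N • ⊤) :
    letI := Module.compHom (AdicCompletion I M) (algebraMap k R)
    Module.Finite k (AdicCompletion I M) := by
  let : Module k M := Module.compHom M (algebraMap k R)
  have : IsScalarTower k R M := .of_algebraMap_smul fun _ _ => rfl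
  have : Module.Finite k (M ⧸ (I ^ N • ⊤ : Submodule R M)) := .trans (R ⧸ I ^ N) _
  have : IsScalarTower k R (AdicCompletion I M) := .of_algebraMap_smul fun _ _ => rfl
  exact .of_injective ((eval I M N).restrictScalars k) fun x y hxy =>
    eval_injective_of_pow_smul_eq h hxy

end AdicCompletion

theorem Subgroup.lowerCentralSeries_succ_le_commutator {G : Type*} [Group G] (q : ℕ) :
    (⊤ : Subgroup G).lowerCentralSeries (q + 1) ≤ _root_.commutator G :=
  lowerCentralSeries_antitone _ (Nat.le_add_left 1 q)

def Subgroup.IsTorsionLowerCentralQuotient (G : Type*) [Group G] (q : ℕ) : Prop :=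
  ∀ x ∈ (⊤ : Subgroup G).lowerCentralSeries q,
    ∃ m : ℕ, 0 < m ∧ x ^ m ∈ (⊤ : Subgroup G).lowerCentralSeries (q + 1)

theorem Subgroup.exists_inv_mul_pow_mem_of_isTorsionLowerCentralQuotient {G : Type*} [Group G]
    {N : Subgroup G} [N.Normal] {q : ℕ} (hq : IsTorsionLowerCentralQuotient (G ⧸ N) q)
    {w : G} (hw : w ∈ (⊤ : Subgroup G).lowerCentralSeries q) :
    ∃ m : ℕ, 0 < m ∧
      ∃ u ∈ (⊤ : Subgroup G).lowerCentralSeries (q + 1), u⁻¹ * w ^ m ∈ N := by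
  have hmap : ∀ n, ((⊤ : Subgroup G).lowerCentralSeries n).map (QuotientGroup.mk' N) =
      (⊤ : Subgroup (G ⧸ N)).lowerCentralSeries n := fun n => by
    rw [map_lowerCentralSeries, map_top_of_surjective _ (QuotientGroup.mk'_surjective N)]
  obtain ⟨m, hm, hpow⟩ := hq _ (hmap q ▸ mem_map_of_mem _ hw)
  rw [← hmap, ← map_pow] at hpow
  obtain ⟨u, hu, hu'⟩ := hpow
  refine ⟨m, hm, u, hu, ?_⟩
  rw [← QuotientGroup.ker_mk' N, MonoidHom.mem_ker, map_mul, map_inv, hu', inv_mul_cancel]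

namespace H1c

variable {K : Type} [Group K]

noncomputable def mk (c : ℂ) (h : K) : H1c K :=
  c ⊗ₜ Additive.ofMul (Abelianization.of h)

theorem mk_mul (c : ℂ) (h₁ h₂ : K) : mk c (h₁ * h₂) = mk c h₁ + mk c h₂ := by
  rw [mk, map_mul, ofMul_mul, TensorProduct.tmul_add]
  rfl

theorem mk_one (c : ℂ) : mk c (1 : K) = 0 :=
  TensorProduct.tmul_zero _ _

theorem mk_inv (c : ℂ) (h : K) : mk c h⁻¹ = -mk c h := by
  rw [mk, map_inv, ofMul_inv, TensorProduct.tmul_neg]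
  rfl

theorem mk_pow (c : ℂ) (h : K) (m : ℕ) : mk c (h ^ m) = mk ((m : ℂ) * c) h := by
  rw [mk, mk, map_pow, ofMul_pow, TensorProduct.tmul_smul, TensorProduct.smul_tmul',
    nsmul_eq_mul]

theorem mk_eq_zero_of_mem_commutator (c : ℂ) {h : K} (hh : h ∈ commutator K) : mk c h = 0 := by
  rw [mk, ← Abelianization.ker_of, MonoidHom.mem_ker] at *
  rw [hh, ofMul_one, TensorProduct.tmul_zero]

theorem mk_eq_zero_of_mem_derivedSeries_two {G : Type} [Group G] (c : ℂ) {d : commutator G}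
    (hd : (d : G) ∈ derivedSeries G 2) : mk c d = 0 := by
  refine mk_eq_zero_of_mem_commutator c ?_
  rwa [← Subgroup.mem_map_iff_mem (commutator G).subtype_injective,
    Subgroup.map_subtype_commutator]

theorem H1cMap_mk {L : Type} [Group L] (f : K →* L) (c : ℂ) (h : K) :
    H1cMap f (mk c h) = mk c (f h) :=
  rfl

theorem span_range_mk {R : Type*} [Semiring R] [Module R (H1c K)] :
    Submodule.span R (Set.range fun p : ℂ × K => mk p.1 p.2) = ⊤ := by
  rw [eq_top_iff]
  rintro x -
  induction x using TensorProduct.induction_on with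
  | zero => exact zero_mem _
  | tmul c a =>
    obtain ⟨h, hh⟩ := QuotientGroup.mk_surjective a.toMul
    exact Submodule.subset_span ⟨(c, h), congrArg (c ⊗ₜ Additive.ofMul ·) hh⟩
  | add x y hx hy => exact add_mem hx hy

def mkPreimage (P : AddSubgroup (H1c K)) : Subgroup K where
  carrier := {h | ∀ c, mk c h ∈ P}
  mul_mem' ha hb c := by rw [mk_mul]; exact add_mem (ha c) (hb c)
  one_mem' c := by rw [mk_one]; exact zero_mem P
  inv_mem' ha c := by rw [mk_inv]; exact neg_mem (ha c)

end H1c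

namespace AlexanderInvariant

variable {G : Type} [Group G] [Module (MonoidAlgebra ℂ (Abelianization G)) (H1c (commutator G))]

noncomputable def lcsSpan (q : ℕ) :
    Submodule (MonoidAlgebra ℂ (Abelianization G)) (H1c (commutator G)) :=
  Submodule.span _ {x | ∃ (c : ℂ) (h : commutator G),
    (h : G) ∈ (⊤ : Subgroup G).lowerCentralSeries (q + 1) ∧ H1c.mk c h = x}

theorem lcsSpan_zero : lcsSpan (G := G) 0 = ⊤ := by
  rw [eq_top_iff, ← H1c.span_range_mk]
  exact Submodule.span_mono fun _ ⟨⟨c, h⟩, hx⟩ => ⟨c, h, h.2, hx⟩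

theorem lcsSpan_le_succ {q : ℕ}
    (hq : Subgroup.IsTorsionLowerCentralQuotient (G ⧸ derivedSeries G 2) (q + 1)) :
    lcsSpan (G := G) q ≤ lcsSpan (q + 1) := by
  rw [lcsSpan, Submodule.span_le]
  rintro _ ⟨c, w, hw, rfl⟩
  obtain ⟨m, hm, u, hu, hd⟩ :=
    Subgroup.exists_inv_mul_pow_mem_of_isTorsionLowerCentralQuotient hq hw
  let u' : commutator G := ⟨u, Subgroup.lowerCentralSeries_succ_le_commutator (q + 1) hu⟩
  have hwm : w ^ m = u' * (u'⁻¹ * w ^ m) := (mul_inv_cancel_left u' _).symm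
  have hm' : (m : ℂ) ≠ 0 := Nat.cast_ne_zero.2 hm.ne'
  have : H1c.mk c w = H1c.mk ((m : ℂ)⁻¹ * c) u' := by
    rw [← mul_inv_cancel_left₀ hm' c, ← H1c.mk_pow, hwm, H1c.mk_mul,
      H1c.mk_eq_zero_of_mem_derivedSeries_two (d := u'⁻¹ * w ^ m) _ hd, add_zero,
      inv_mul_cancel_left₀ hm']
  exact Submodule.subset_span ⟨_, u', hu, this.symm⟩

section Conjugation

variable (hconj : ∀ (g : G) (y : H1c (commutator G)),
    single (Abelianization.of g) (1 : ℂ) • y =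
      H1cMap ((MulAut.conjNormal (H := commutator G) g).toMonoidHom) y)
include hconj

theorem single_sub_one_smul_mk (g : G) (c : ℂ) (h : commutator G) :
    (single (Abelianization.of g) (1 : ℂ) - 1) • H1c.mk c h =
      H1c.mk c ⟨⁅g, (h : G)⁆,
        Subgroup.commutator_mem_commutator (Subgroup.mem_top g) (Subgroup.mem_top (h : G))⟩ := by
  have hconj_eq : MulAut.conjNormal (H := commutator G) g h = ⟨⁅g, (h : G)⁆,
      Subgroup.commutator_mem_commutator (Subgroup.mem_top g) (Subgroup.mem_top (h : G))⟩ * h :=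
    Subtype.ext (by simp [commutatorElement_def])
  rw [sub_smul, one_smul, hconj, H1c.H1cMap_mk, MulEquiv.coe_toMonoidHom, hconj_eq, H1c.mk_mul,
    add_sub_cancel_right]

theorem ker_lift_smul_lcsSpan_le (q : ℕ) :
    RingHom.ker (lift ℂ ℂ (Abelianization G) 1) • lcsSpan q ≤ lcsSpan (G := G) (q + 1) := by
  rw [ker_lift_one_eq_span, lcsSpan, Submodule.span_smul_span, Submodule.span_le]
  rintro _ ⟨_, ⟨a, rfl⟩, _, ⟨c, h, hh, rfl⟩, rfl⟩
  obtain ⟨g, rfl⟩ := QuotientGroup.mk_surjective a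
  refine Submodule.subset_span ⟨c, _, ?_, (single_sub_one_smul_mk hconj g c h).symm⟩
  show ⁅g, (h : G)⁆ ∈ _
  rw [← commutatorElement_inv]
  exact inv_mem (Subgroup.commutator_mem_commutator hh (Subgroup.mem_top g))

theorem lcsSpan_succ_le (q : ℕ) :
    lcsSpan (G := G) (q + 1) ≤ RingHom.ker (lift ℂ ℂ (Abelianization G) 1) • lcsSpan q := by
  set P := RingHom.ker (lift ℂ ℂ (Abelianization G) 1) • lcsSpan (G := G) q
  -- the `w` with every `c ⊗ [w]` in `P` form a subgroup, so the generators `⁅p, u⁆` suffice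
  have hgen : (⊤ : Subgroup G).lowerCentralSeries (q + 2) ≤
      (H1c.mkPreimage P.toAddSubgroup).map (commutator G).subtype := by
    rw [Subgroup.lowerCentralSeries_succ, Subgroup.commutator_le]
    intro p hp u _
    have hp' := Subgroup.lowerCentralSeries_succ_le_commutator q hp
    refine ⟨⟨⁅u, p⁆, Subgroup.commutator_mem_commutator (Subgroup.mem_top u)
      (Subgroup.mem_top p)⟩⁻¹, fun c => ?_, commutatorElement_inv u p⟩
    rw [H1c.mk_inv, ← single_sub_one_smul_mk hconj u c ⟨p, hp'⟩]
    refine neg_mem (Submodule.smul_mem_smul ?_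
      (Submodule.subset_span ⟨c, ⟨p, hp'⟩, hp, rfl⟩))
    rw [ker_lift_one_eq_span]
    exact Ideal.subset_span ⟨_, rfl⟩
  rw [lcsSpan, Submodule.span_le]
  rintro _ ⟨c, h, hh, rfl⟩
  exact (Subgroup.mem_map_iff_mem (commutator G).subtype_injective).1 (hgen hh) c

theorem lcsSpan_eq_pow_smul_top (q : ℕ) :
    lcsSpan (G := G) q = RingHom.ker (lift ℂ ℂ (Abelianization G) 1) ^ q • ⊤ := by
  induction q with
  | zero => rw [lcsSpan_zero, pow_zero, Ideal.one_eq_top, Submodule.top_smul]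
  | succ q ih =>
    rw [pow_succ', ← Ideal.smul_eq_mul, Submodule.smul_assoc, ← ih]
    exact le_antisymm (lcsSpan_succ_le hconj q) (ker_lift_smul_lcsSpan_le hconj q)

theorem pow_smul_top_stable {N : ℕ}
    (hN : ∀ q ≥ N, Subgroup.IsTorsionLowerCentralQuotient (G ⧸ derivedSeries G 2) q)
    (j : ℕ) (hj : N ≤ j) :
    (RingHom.ker (lift ℂ ℂ (Abelianization G) 1) ^ j • ⊤ :
        Submodule (MonoidAlgebra ℂ (Abelianization G)) (H1c (commutator G))) =
      RingHom.ker (lift ℂ ℂ (Abelianization G) 1) ^ N • ⊤ := by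
  induction j, hj using Nat.le_induction with
  | base => rfl
  | succ n hn ih =>
    refine ih ▸ le_antisymm (Submodule.smul_mono_left (Ideal.pow_le_pow_right n.le_succ)) ?_
    rw [← lcsSpan_eq_pow_smul_top hconj, ← lcsSpan_eq_pow_smul_top hconj]
    exact lcsSpan_le_succ (hN (n + 1) (by omega))

end Conjugation

end AlexanderInvariant

theorem alexander_invariant_completion_finite_general
    (G : Type) [Group G] (hGfg : Group.FG G)
    -- `gr_q(G/G'') ⊗ ℂ = 0` for all large `q`
    (hgr : ∃ N : ℕ, ∀ q ≥ N, ∀ x ∈ Subgroup.lowerCentralSeries (⊤ : Subgroup (G ⧸ derivedSeries G 2)) q,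
      ∃ m : ℕ, 0 < m ∧ x ^ m ∈ Subgroup.lowerCentralSeries (⊤ : Subgroup (G ⧸ derivedSeries G 2)) (q + 1))
    -- the augmentation ideal `I ⊆ ℂ[G_ab]`
    (I : Ideal (MonoidAlgebra ℂ (Abelianization G)))
    (hI : I = RingHom.ker (MonoidAlgebra.lift ℂ ℂ (Abelianization G) 1))
    -- the conjugation `ℂ[G_ab]`-module structure on `H₁(G',ℂ) = (G'/G'') ⊗ ℂ`
    (instM : Module (MonoidAlgebra ℂ (Abelianization G)) (H1c ↥(commutator G)))
    (hconj : ∀ (g : G) (y : H1c ↥(commutator G)),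
      (MonoidAlgebra.single (Abelianization.of g) (1 : ℂ)) • y =
        H1cMap ((MulAut.conjNormal (H := commutator G) g).toMonoidHom) y)
    (hfin : Module.Finite (MonoidAlgebra ℂ (Abelianization G)) (H1c ↥(commutator G))) :
    -- the `I`-adic filtration stabilizes …
    (∃ k : ℕ, ∀ j ≥ k,
      (I ^ j • ⊤ : Submodule (MonoidAlgebra ℂ (Abelianization G)) (H1c ↥(commutator G)))
        = I ^ k • ⊤) ∧
    -- … and the `I`-adic completion is finite-dimensional over `ℂ`
    (letI : Module ℂ (AdicCompletion I (H1c ↥(commutator G))) :=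
      Module.compHom _ (algebraMap ℂ (MonoidAlgebra ℂ (Abelianization G)))
     FiniteDimensional ℂ (AdicCompletion I (H1c ↥(commutator G)))) := by
  subst hI
  obtain ⟨N, hN⟩ := hgr
  have hstab := AlexanderInvariant.pow_smul_top_stable hconj hN
  refine ⟨⟨N, hstab⟩, ?_⟩
  have : Group.FG (Abelianization G) := QuotientGroup.fg _
  have := MonoidAlgebra.finite_quotient_ker_lift_one_pow (k := ℂ) (G := Abelianization G) N
  exact AdicCompletion.finite_of_pow_smul_eq ℂ hstab

/-- Let `G` be a finitely generated group such that
`gr•(G/G'') ⊗ ℂ` vanishes in all sufficiently large degrees (each quotient of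
consecutive terms of the lower central series of `G/G''` is eventually torsion).
Then the `I`-adic filtration on the Alexander invariant `H₁(G',ℂ)` (a module over
`ℂ[G_ab]` via conjugation, `I` the augmentation ideal) stabilizes, and the `I`-adic
completion of `H₁(G',ℂ)` is finite-dimensional over `ℂ`. -/
theorem alexander_invariant_completion_finite
    (G : Type) [Group G] (hGfg : Group.FG G)
    [h2 : (derivedSeries G 2).Normal]
    -- `gr_q(G/G'') ⊗ ℂ = 0` for all large `q`
    (hgr : ∃ N : ℕ, ∀ q ≥ N, ∀ x ∈ Subgroup.lowerCentralSeries (⊤ : Subgroup (G ⧸ derivedSeries G 2)) q,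
      ∃ m : ℕ, 0 < m ∧ x ^ m ∈ Subgroup.lowerCentralSeries (⊤ : Subgroup (G ⧸ derivedSeries G 2)) (q + 1))
    -- the augmentation ideal `I ⊆ ℂ[G_ab]`
    (I : Ideal (MonoidAlgebra ℂ (Abelianization G)))
    (hI : I = RingHom.ker (MonoidAlgebra.lift ℂ ℂ (Abelianization G) 1))
    -- the conjugation `ℂ[G_ab]`-module structure on `H₁(G',ℂ) = (G'/G'') ⊗ ℂ`
    (instM : Module (MonoidAlgebra ℂ (Abelianization G)) (H1c ↥(commutator G)))
    (hconj : ∀ (g : G) (y : H1c ↥(commutator G)),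
      (MonoidAlgebra.single (Abelianization.of g) (1 : ℂ)) • y =
        H1cMap ((MulAut.conjNormal (H := commutator G) g).toMonoidHom) y)
    (hfin : Module.Finite (MonoidAlgebra ℂ (Abelianization G)) (H1c ↥(commutator G))) :
    -- the `I`-adic filtration stabilizes …
    (∃ k : ℕ, ∀ j ≥ k,
      (I ^ j • ⊤ : Submodule (MonoidAlgebra ℂ (Abelianization G)) (H1c ↥(commutator G)))
        = I ^ k • ⊤) ∧
    -- … and the `I`-adic completion is finite-dimensional over `ℂ`
    (letI : Module ℂ (AdicCompletion I (H1c ↥(commutator G))) :=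
      Module.compHom _ (algebraMap ℂ (MonoidAlgebra ℂ (Abelianization G)))
     FiniteDimensional ℂ (AdicCompletion I (H1c ↥(commutator G)))) :=
  alexander_invariant_completion_finite_general G hGfg hgr I hI instM hconj hfin
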